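/- arXiv:1009.3705 — 5 statements merged into one kernel-verified Lean document; each statement's English description precedes it below -/
import Mathlib

section
/- Let h : [0, r) → ℝ be a C^2 function with h'(0) = 0, lim_{u→r} h(u) = ∞, and satisfying h''(u) (h'(u))^{n-1} = e^{λ h(u)} D(u) for all u ∈ [0, r), where D is continuous, D(u) > 0 for u ∈ (0, r), and D(0) = 0 (for n ≥ 2). Then h'(u) > 0 and h''(u) > 0 for all u ∈ (0, r). -/
/-!
When `n ≥ 2`, the equation forces `h' ≠ 0` on `(0, r)`, so `h'` has constant sign there; a negative
sign would make `h` decreasing, which is incompatible with the blow-up at `r`. When `n = 1`, the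
equation reads `h'' = e^{λh} D > 0`, and `h'` increases from `h'(0) = 0`. In both cases `h' > 0`,
and then `h'' > 0` is read off the equation.
-/

open Real Set Filter Topology

theorem IsPreconnected.forall_lt_or_forall_gt_of_forall_ne {α β : Type*} [TopologicalSpace α]
    [TopologicalSpace β] [LinearOrder β] [OrderClosedTopology β] {s : Set α} {f : α → β} {c : β}
    (hs : IsPreconnected s) (hf : ContinuousOn f s) (hne : ∀ x ∈ s, f x ≠ c) :
    (∀ x ∈ s, c < f x) ∨ (∀ x ∈ s, f x < c) := by
  by_contra! ⟨⟨x, hx, hfx⟩, ⟨y, hy, hfy⟩⟩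
  obtain ⟨z, hz, hfz⟩ := hs.intermediate_value hx hy hf ⟨hfx, hfy⟩
  exact hne z hz hfz

theorem AntitoneOn.not_tendsto_atTop_nhdsLT {α β : Type*} [TopologicalSpace α] [LinearOrder α]
    [OrderTopology α] [DenselyOrdered α] [Preorder β] [NoMaxOrder β] {f : α → β} {a b : α}
    (hab : a < b) (hf : AntitoneOn f (Ico a b)) : ¬Tendsto f (𝓝[<] b) atTop := by
  intro hblow
  have := nhdsLT_neBot_of_exists_lt ⟨a, hab⟩
  obtain ⟨x, hfx, hx⟩ := ((hblow.eventually_gt_atTop (f a)).and (Ioo_mem_nhdsLT hab)).exists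
  exact (hf (left_mem_Ico.2 hab) (Ioo_subset_Ico_self hx) hx.1.le).not_gt hfx

theorem pos_of_hasDerivAt_pos_of_eq_zero {f f' : ℝ → ℝ} {a b : ℝ} (hab : a < b)
    (hf : ∀ x ∈ Ico a b, HasDerivAt f (f' x) x) (hf' : ∀ x ∈ Ioo a b, 0 < f' x) (ha : f a = 0) :
    ∀ x ∈ Ioo a b, 0 < f x := by
  have hmono : StrictMonoOn f (Ico a b) :=
    strictMonoOn_of_hasDerivWithinAt_pos (convex_Ico a b) (HasDerivAt.continuousOn hf)
      (fun x hx ↦ by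
        rw [interior_Ico] at hx ⊢
        exact (hf x (Ioo_subset_Ico_self hx)).hasDerivWithinAt)
      (fun x hx ↦ hf' x (by rwa [interior_Ico] at hx))
  intro x hx
  simpa [ha] using hmono (left_mem_Ico.2 hab) (Ioo_subset_Ico_self hx) hx.1

theorem deriv_pos_of_ne_zero_of_tendsto_atTop {f f' : ℝ → ℝ} {a b : ℝ} (hab : a < b)
    (hf : ∀ x ∈ Ico a b, HasDerivAt f (f' x) x) (hf' : ContinuousOn f' (Ioo a b))
    (hne : ∀ x ∈ Ioo a b, f' x ≠ 0) (hblow : Tendsto f (𝓝[<] b) atTop) :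
    ∀ x ∈ Ioo a b, 0 < f' x := by
  refine (isPreconnected_Ioo.forall_lt_or_forall_gt_of_forall_ne hf' hne).resolve_right
    fun hneg ↦ AntitoneOn.not_tendsto_atTop_nhdsLT hab ?_ hblow
  refine antitoneOn_of_hasDerivWithinAt_nonpos (f' := f') (convex_Ico a b)
    (HasDerivAt.continuousOn hf) (fun x hx ↦ ?_) (fun x hx ↦ ?_)
  · rw [interior_Ico] at hx ⊢
    exact (hf x (Ioo_subset_Ico_self hx)).hasDerivWithinAt
  · rw [interior_Ico] at hx
    exact (hneg x hx).le

theorem derivatives_positive_of_blowup_general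
    (n : ℕ) (lam r : ℝ) (hr : 0 < r)
    (D h h' h'' : ℝ → ℝ)
    (hDpos : ∀ u ∈ Set.Ioo 0 r, 0 < D u)
    (hder1 : ∀ u ∈ Set.Ico 0 r, HasDerivAt h (h' u) u)
    (hder2 : ∀ u ∈ Set.Ico 0 r, HasDerivAt h' (h'' u) u)
    (h'0 : h' 0 = 0)
    (hblow : Filter.Tendsto h (nhdsWithin r (Set.Iio r)) Filter.atTop)
    (hODE : ∀ u ∈ Set.Ico 0 r, h'' u * (h' u) ^ (n - 1) = Real.exp (lam * h u) * D u) :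
    ∀ u ∈ Set.Ioo 0 r, 0 < h' u ∧ 0 < h'' u := by
  have hODE' : ∀ u ∈ Ioo 0 r, 0 < h'' u * h' u ^ (n - 1) := fun u hu ↦ by
    rw [hODE u (Ioo_subset_Ico_self hu)]
    exact mul_pos (exp_pos _) (hDpos u hu)
  have h'pos : ∀ u ∈ Ioo 0 r, 0 < h' u := by
    rcases Nat.eq_zero_or_pos (n - 1) with hn | hn
    · refine pos_of_hasDerivAt_pos_of_eq_zero hr hder2 (fun u hu ↦ ?_) h'0
      simpa [hn] using hODE' u hu
    · refine deriv_pos_of_ne_zero_of_tendsto_atTop hr hder1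
        (HasDerivAt.continuousOn fun u hu ↦ hder2 u (Ioo_subset_Ico_self hu))
        (fun u hu h'u ↦ ?_) hblow
      simpa [h'u, zero_pow hn.ne'] using hODE' u hu
  exact fun u hu ↦ ⟨h'pos u hu, pos_of_mul_pos_left (hODE' u hu) (pow_pos (h'pos u hu) _).le⟩

theorem derivatives_positive_of_blowup
    (n : ℕ) (hn : 1 ≤ n) (lam r : ℝ) (hlam : 0 < lam) (hr : 0 < r)
    (D h h' h'' : ℝ → ℝ)
    (hD : ContinuousOn D (Set.Ico 0 r))
    (hDpos : ∀ u ∈ Set.Ioo 0 r, 0 < D u)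
    (hder1 : ∀ u ∈ Set.Ico 0 r, HasDerivAt h (h' u) u)
    (hder2 : ∀ u ∈ Set.Ico 0 r, HasDerivAt h' (h'' u) u)
    (hcont : ContinuousOn h'' (Set.Ico 0 r))
    (h'0 : h' 0 = 0)
    (hblow : Filter.Tendsto h (nhdsWithin r (Set.Iio r)) Filter.atTop)
    (hODE : ∀ u ∈ Set.Ico 0 r, h'' u * (h' u) ^ (n - 1) = Real.exp (lam * h u) * D u) :
    ∀ u ∈ Set.Ioo 0 r, 0 < h' u ∧ 0 < h'' u :=
  derivatives_positive_of_blowup_general n lam r hr D h h' h'' hDpos hder1 hder2 h'0 hblow hODE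
end

section
/- If a C^2 function h on [0, r) satisfies h''(u)(h'(u))^{n-1} = e^{λ h(u)} D(u), h'(0) = 0, h' ≥ 0, and lim_{u→r} h(u) = ∞, then lim_{u→r} h'(u) = ∞. -/
/-!
The equation forces `h'' > 0` on `(0, r)`, so `h'` is increasing. If `h'` were bounded above
on `[0, r)`, the mean value theorem would bound `h` there as well, contradicting the blow-up
of `h` at `r`. An increasing function that is unbounded on `[0, r)` tends to `∞` at `r`.
-/

open Real Set Filter Topology

theorem MonotoneOn.tendsto_nhdsLT_atTop {α β : Type*} [LinearOrder α] [TopologicalSpace α]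
    [OrderTopology α] [LinearOrder β] {f : α → β} {a r : α} (hf : MonotoneOn f (Ico a r))
    (hunb : ¬BddAbove (f '' Ico a r)) : Tendsto f (𝓝[<] r) atTop := by
  rw [tendsto_atTop]
  intro M
  obtain ⟨_, ⟨x, hx, rfl⟩, hMx⟩ := not_bddAbove_iff.mp hunb M
  filter_upwards [Ioo_mem_nhdsLT hx.2] with y hy
  exact hMx.le.trans (hf hx ⟨hx.1.trans hy.1.le, hy.2⟩ hy.1.le)

theorem Filter.Tendsto.not_bddAbove_image_Ico {f : ℝ → ℝ} {a r : ℝ} (hf : Tendsto f (𝓝[<] r) atTop)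
    (har : a < r) : ¬BddAbove (f '' Ico a r) := by
  rintro ⟨M, hM⟩
  obtain ⟨x, hMx, hx⟩ := ((hf.eventually_gt_atTop M).and (Ioo_mem_nhdsLT har)).exists
  exact (hM ⟨x, Ioo_subset_Ico_self hx, rfl⟩).not_gt hMx

theorem monotoneOn_Ico_of_hasDerivAt_nonneg {f f' : ℝ → ℝ} {a r : ℝ}
    (hf : ∀ x ∈ Ico a r, HasDerivAt f (f' x) x) (hf' : ∀ x ∈ Ioo a r, 0 ≤ f' x) :
    MonotoneOn f (Ico a r) := by
  refine monotoneOn_of_deriv_nonneg (convex_Ico a r)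
    (fun x hx ↦ (hf x hx).continuousAt.continuousWithinAt) (fun x hx ↦ ?_) (fun x hx ↦ ?_) <;>
    rw [interior_Ico] at hx
  · exact (hf x (Ioo_subset_Ico_self hx)).differentiableAt.differentiableWithinAt
  · exact (hf x (Ioo_subset_Ico_self hx)).deriv ▸ hf' x hx

theorem bddAbove_image_Ico_of_hasDerivAt {f f' : ℝ → ℝ} {a r : ℝ}
    (hf : ∀ x ∈ Ico a r, HasDerivAt f (f' x) x) (hf' : BddAbove (f' '' Ico a r)) :
    BddAbove (f '' Ico a r) := by
  obtain ⟨C, hC⟩ := hf'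
  refine ⟨f a + max C 0 * (r - a), ?_⟩
  rintro _ ⟨x, hx, rfl⟩
  have ha : a ∈ Ico a r := ⟨le_rfl, hx.1.trans_lt hx.2⟩
  have hmvt : f x - f a ≤ C * (x - a) := by
    refine (convex_Ico a r).image_sub_le_mul_sub_of_deriv_le
      (fun y hy ↦ (hf y hy).continuousAt.continuousWithinAt) (fun y hy ↦ ?_) (fun y hy ↦ ?_)
      a ha x hx hx.1 <;> rw [interior_Ico] at hy
    · exact (hf y (Ioo_subset_Ico_self hy)).differentiableAt.differentiableWithinAt
    · exact (hf y (Ioo_subset_Ico_self hy)).deriv ▸ hC ⟨y, Ioo_subset_Ico_self hy, rfl⟩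
  have hxa : 0 ≤ x - a := sub_nonneg.mpr hx.1
  nlinarith [le_max_left C 0, le_max_right C 0, hx.2]

theorem derivative_blowup_of_blowup_general
    (n : ℕ) (lam r : ℝ) (hr : 0 < r)
    (D h h' h'' : ℝ → ℝ)
    (hDpos : ∀ u ∈ Set.Ioo 0 r, 0 < D u)
    (hder1 : ∀ u ∈ Set.Ico 0 r, HasDerivAt h (h' u) u)
    (hder2 : ∀ u ∈ Set.Ico 0 r, HasDerivAt h' (h'' u) u)
    (h'nonneg : ∀ u ∈ Set.Ico 0 r, 0 ≤ h' u)
    (hODE : ∀ u ∈ Set.Ico 0 r, h'' u * (h' u) ^ (n - 1) = Real.exp (lam * h u) * D u)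
    (hblow : Filter.Tendsto h (nhdsWithin r (Set.Iio r)) Filter.atTop) :
    Filter.Tendsto h' (nhdsWithin r (Set.Iio r)) Filter.atTop := by
  have h''_pos (u : ℝ) (hu : u ∈ Ioo 0 r) : 0 < h'' u := by
    have hu' := Ioo_subset_Ico_self hu
    refine pos_of_mul_pos_left (b := h' u ^ (n - 1)) ?_ (pow_nonneg (h'nonneg u hu') _)
    rw [hODE u hu']
    exact mul_pos (exp_pos _) (hDpos u hu)
  have hmono : MonotoneOn h' (Ico 0 r) :=
    monotoneOn_Ico_of_hasDerivAt_nonneg hder2 fun u hu ↦ (h''_pos u hu).le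
  have hunb : ¬BddAbove (h' '' Ico 0 r) := fun hbdd ↦
    hblow.not_bddAbove_image_Ico hr (bddAbove_image_Ico_of_hasDerivAt hder1 hbdd)
  exact hmono.tendsto_nhdsLT_atTop hunb

theorem derivative_blowup_of_blowup
    (n : ℕ) (hn : 1 ≤ n) (lam r : ℝ) (hlam : 0 < lam) (hr : 0 < r)
    (D h h' h'' : ℝ → ℝ)
    (hD : ContinuousOn D (Set.Ico 0 r))
    (hDpos : ∀ u ∈ Set.Ioo 0 r, 0 < D u)
    (hder1 : ∀ u ∈ Set.Ico 0 r, HasDerivAt h (h' u) u)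
    (hder2 : ∀ u ∈ Set.Ico 0 r, HasDerivAt h' (h'' u) u)
    (hcont : ContinuousOn h'' (Set.Ico 0 r))
    (h'0 : h' 0 = 0)
    (h'nonneg : ∀ u ∈ Set.Ico 0 r, 0 ≤ h' u)
    (hODE : ∀ u ∈ Set.Ico 0 r, h'' u * (h' u) ^ (n - 1) = Real.exp (lam * h u) * D u)
    (hblow : Filter.Tendsto h (nhdsWithin r (Set.Iio r)) Filter.atTop) :
    Filter.Tendsto h' (nhdsWithin r (Set.Iio r)) Filter.atTop :=
  derivative_blowup_of_blowup_general n lam r hr D h h' h'' hDpos hder1 hder2 h'nonneg hODE hblow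
end

section
/- Let 0 < s < r and let h_r on [0, r) and h_s on [0, s) be the respective C^2 solutions of h''(u)(h'(u))^{n-1} = e^{λ h(u)} D(u) with h'(0) = 0, h', h'' > 0 on (0, ·), and boundary blow-up lim_{u→r} h_r(u) = ∞, lim_{u→s} h_s(u) = ∞. Then h_r(u) ≤ h_s(u) for all u ∈ [0, s). -/
/-!
Suppose `h_R > h_S` somewhere in `[0, s)`. Since `h_R` is bounded on `[0, s]` while `h_S` blows up at
`s`, the difference `G = h_R - h_S` is negative at some `u₁ < s`, so its maximum on `[0, u₁]` is
positive and attained at some `t < u₁`, where the slopes agree (both vanish at `0`; otherwise `G' = 0`).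
The equation says `((h')ⁿ)' = n e^{λh} D`, so `(h_R')ⁿ - (h_S')ⁿ` grows as long as
`h_R ≥ h_S`; starting from `0` at `t` this keeps `h_R' ≥ h_S'`, hence `G` cannot decrease from its
positive value at `t` to a negative one at `u₁`.
-/

open Real Set Filter Topology

lemma ContinuousOn.exists_first_nonpos {G : ℝ → ℝ} {a b : ℝ} (hG : ContinuousOn G (Icc a b))
    (hab : a ≤ b) (hb : G b ≤ 0) : ∃ c ∈ Icc a b, G c ≤ 0 ∧ ∀ x ∈ Ico a c, 0 < G x := by
  set S := Icc a b ∩ G ⁻¹' Iic 0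
  have hbdd : BddBelow S := ⟨a, fun x hx => hx.1.1⟩
  have hmem : sInf S ∈ S := (hG.preimage_isClosed_of_isClosed isClosed_Icc isClosed_Iic).csInf_mem
    ⟨b, right_mem_Icc.2 hab, hb⟩ hbdd
  refine ⟨sInf S, hmem.1, hmem.2, fun x hx => ?_⟩
  by_contra! hx'
  exact (csInf_le hbdd ⟨⟨hx.1, hx.2.le.trans hmem.1.2⟩, hx'⟩).not_gt hx.2

lemma exists_mem_Ioo_lt_of_tendsto_atTop {g h : ℝ → ℝ} {a s : ℝ} (has : a < s)
    (hg : ContinuousOn g (Icc a s)) (hh : Tendsto h (𝓝[<] s) atTop) :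
    ∃ u ∈ Ioo a s, g u < h u := by
  obtain ⟨C, hC⟩ := isCompact_Icc.bddAbove_image hg
  obtain ⟨u, hu, hCu⟩ : ∃ u, u ∈ Ioo a s ∧ C < h u :=
    (Filter.Eventually.and (Ioo_mem_nhdsLT_of_mem ⟨has, le_rfl⟩) (hh.eventually_gt_atTop C)).exists
  exact ⟨u, hu, (hC ⟨u, Ioo_subset_Icc_self hu, rfl⟩).trans_lt hCu⟩

lemma monotoneOn_Icc_of_hasDerivAt_nonneg {g g' : ℝ → ℝ} {a b : ℝ}
    (hg : ∀ x ∈ Icc a b, HasDerivAt g (g' x) x) (hg' : ∀ x ∈ Ioo a b, 0 ≤ g' x) :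
    MonotoneOn g (Icc a b) := by
  refine monotoneOn_of_hasDerivWithinAt_nonneg (convex_Icc a b)
    (fun x hx => (hg x hx).continuousAt.continuousWithinAt) (fun x hx => ?_) (by rwa [interior_Icc])
  rw [interior_Icc] at hx ⊢
  exact (hg x (Ioo_subset_Icc_self hx)).hasDerivWithinAt

structure IsSolutionOn (n : ℕ) (f D h h' h'' : ℝ → ℝ) (I : Set ℝ) : Prop where
  hasDerivAt : ∀ x ∈ I, HasDerivAt h (h' x) x
  hasDerivAt_deriv : ∀ x ∈ I, HasDerivAt h' (h'' x) x
  ode : ∀ x ∈ I, h'' x * h' x ^ (n - 1) = f (h x) * D x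

namespace IsSolutionOn

variable {n : ℕ} {f D h h' h'' : ℝ → ℝ} {I J : Set ℝ}

lemma mono (sol : IsSolutionOn n f D h h' h'' I) (hJI : J ⊆ I) : IsSolutionOn n f D h h' h'' J :=
  ⟨fun x hx => sol.hasDerivAt x (hJI hx), fun x hx => sol.hasDerivAt_deriv x (hJI hx),
    fun x hx => sol.ode x (hJI hx)⟩

lemma hasDerivAt_pow (sol : IsSolutionOn n f D h h' h'' I) {x : ℝ} (hx : x ∈ I) :
    HasDerivAt (fun y => h' y ^ n) (n * (f (h x) * D x)) x := by
  rw [← sol.ode x hx]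
  exact ((sol.hasDerivAt_deriv x hx).fun_pow n).congr_deriv (by ring)

variable {h₁ h₁' h₁'' h₂ h₂' h₂'' : ℝ → ℝ} {a b : ℝ}
  (sol₁ : IsSolutionOn n f D h₁ h₁' h₁'' (Icc a b)) (sol₂ : IsSolutionOn n f D h₂ h₂' h₂'' (Icc a b))
  (hf : Monotone f) (hD : ∀ x ∈ Icc a b, 0 ≤ D x)
include sol₁ sol₂ hf hD

lemma monotoneOn_pow_sub_pow (hle : ∀ x ∈ Ioo a b, h₂ x ≤ h₁ x) :
    MonotoneOn (fun x => h₁' x ^ n - h₂' x ^ n) (Icc a b) := by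
  refine monotoneOn_Icc_of_hasDerivAt_nonneg
    (fun x hx => (sol₁.hasDerivAt_pow hx).sub (sol₂.hasDerivAt_pow hx)) fun x hx => ?_
  have hfD : 0 ≤ n * ((f (h₁ x) - f (h₂ x)) * D x) :=
    mul_nonneg n.cast_nonneg (mul_nonneg (sub_nonneg.2 (hf (hle x hx)))
      (hD x (Ioo_subset_Icc_self hx)))
  linarith

lemma monotoneOn_sub (hn : n ≠ 0) (h₁'_nonneg : ∀ x ∈ Icc a b, 0 ≤ h₁' x)
    (h₂'_nonneg : ∀ x ∈ Icc a b, 0 ≤ h₂' x) (hslope : h₁' a = h₂' a)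
    (hle : ∀ x ∈ Ioo a b, h₂ x ≤ h₁ x) : MonotoneOn (h₁ - h₂) (Icc a b) := by
  refine monotoneOn_Icc_of_hasDerivAt_nonneg
    (fun x hx => (sol₁.hasDerivAt x hx).sub (sol₂.hasDerivAt x hx)) fun x hx => ?_
  have hx' := Ioo_subset_Icc_self hx
  have hpow : h₂' x ^ n ≤ h₁' x ^ n := by
    have := sol₁.monotoneOn_pow_sub_pow sol₂ hf hD hle (left_mem_Icc.2 (hx.1.trans hx.2).le) hx'
      hx.1.le
    simpa only [hslope, sub_self, sub_nonneg] using this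
  exact sub_nonneg.2 ((pow_le_pow_iff_left₀ (h₂'_nonneg x hx') (h₁'_nonneg x hx') hn).1 hpow)

lemma lt_right_of_lt_left (hn : n ≠ 0) (h₁'_nonneg : ∀ x ∈ Icc a b, 0 ≤ h₁' x)
    (h₂'_nonneg : ∀ x ∈ Icc a b, 0 ≤ h₂' x) (hab : a ≤ b) (hslope : h₁' a = h₂' a)
    (hlt : h₂ a < h₁ a) : h₂ b < h₁ b := by
  by_contra! hb
  obtain ⟨c, hc, hGc, hpos⟩ := ContinuousOn.exists_first_nonpos (G := h₁ - h₂)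
    (fun x hx => ((sol₁.hasDerivAt x hx).sub (sol₂.hasDerivAt x hx)).continuousAt.continuousWithinAt)
    hab (sub_nonpos.2 hb)
  have hac : Icc a c ⊆ Icc a b := Icc_subset_Icc_right hc.2
  have hmono := (sol₁.mono hac).monotoneOn_sub (sol₂.mono hac) hf (fun x hx => hD x (hac hx)) hn
    (fun x hx => h₁'_nonneg x (hac hx)) (fun x hx => h₂'_nonneg x (hac hx)) hslope
    (fun x hx => (sub_pos.1 (hpos x (Ioo_subset_Ico_self hx))).le)
  have := hmono (left_mem_Icc.2 hc.1) (right_mem_Icc.2 hc.1) hc.1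
  simp only [Pi.sub_apply] at this hGc
  linarith

end IsSolutionOn

lemma nonneg_on_Ico_of_pos_on_Ioo {g : ℝ → ℝ} {a c : ℝ} (ha : 0 ≤ g a)
    (hpos : ∀ u ∈ Ioo a c, 0 < g u) : ∀ u ∈ Ico a c, 0 ≤ g u := by
  rintro u ⟨hau, huc⟩
  rcases hau.eq_or_lt with rfl | hau
  · exact ha
  · exact (hpos u ⟨hau, huc⟩).le

theorem comparison_of_blowup_solutions_general
    (n : ℕ) (hn : 1 ≤ n) (lam s r : ℝ) (hlam : 0 < lam) (hsr : s < r)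
    (D hr' hr'' hs' hs'' : ℝ → ℝ) (hR hS : ℝ → ℝ)
    (hDnonneg : ∀ u ∈ Set.Ico 0 r, 0 ≤ D u)
    (hderR1 : ∀ u ∈ Set.Ico 0 r, HasDerivAt hR (hr' u) u)
    (hderR2 : ∀ u ∈ Set.Ico 0 r, HasDerivAt hr' (hr'' u) u)
    (hODER : ∀ u ∈ Set.Ico 0 r, hr'' u * (hr' u) ^ (n - 1) = Real.exp (lam * hR u) * D u)
    (hR'0 : hr' 0 = 0)
    (hR'pos : ∀ u ∈ Set.Ioo 0 r, 0 < hr' u)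
    (hderS1 : ∀ u ∈ Set.Ico 0 s, HasDerivAt hS (hs' u) u)
    (hderS2 : ∀ u ∈ Set.Ico 0 s, HasDerivAt hs' (hs'' u) u)
    (hODES : ∀ u ∈ Set.Ico 0 s, hs'' u * (hs' u) ^ (n - 1) = Real.exp (lam * hS u) * D u)
    (hS'0 : hs' 0 = 0)
    (hS'pos : ∀ u ∈ Set.Ioo 0 s, 0 < hs' u)
    (hSblow : Filter.Tendsto hS (nhdsWithin s (Set.Iio s)) Filter.atTop) :
    ∀ u ∈ Set.Ico 0 s, hR u ≤ hS u := by
  intro u₀ hu₀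
  by_contra! hgt
  have hsub : Ico 0 s ⊆ Ico 0 r := Ico_subset_Ico_right hsr.le
  have solR : IsSolutionOn n (fun y => exp (lam * y)) D hR hr' hr'' (Ico 0 s) :=
    IsSolutionOn.mono ⟨hderR1, hderR2, hODER⟩ hsub
  have solS : IsSolutionOn n (fun y => exp (lam * y)) D hS hs' hs'' (Ico 0 s) :=
    ⟨hderS1, hderS2, hODES⟩
  obtain ⟨u₁, hu₁, hRS⟩ := exists_mem_Ioo_lt_of_tendsto_atTop hu₀.2
    (fun x hx => (hderR1 x ⟨hu₀.1.trans hx.1, hx.2.trans_lt hsr⟩).continuousAt.continuousWithinAt)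
    hSblow
  have hI : Icc 0 u₁ ⊆ Ico 0 s := Icc_subset_Ico_right hu₁.2
  have hderG x (hx : x ∈ Icc 0 u₁) := (solR.hasDerivAt x (hI hx)).sub (solS.hasDerivAt x (hI hx))
  obtain ⟨t, ht, hmax⟩ := isCompact_Icc.exists_isMaxOn (nonempty_Icc.2 (hu₀.1.trans hu₁.1.le))
    fun x hx => (hderG x hx).continuousAt.continuousWithinAt
  have hSRt : hS t < hR t := by
    have : hR u₀ - hS u₀ ≤ hR t - hS t := hmax ⟨hu₀.1, hu₁.1.le⟩
    linarith
  have htu₁ : t < u₁ := ht.2.lt_of_ne (by rintro rfl; linarith)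
  have hslope : hr' t = hs' t := by
    rcases ht.1.eq_or_lt with rfl | h0
    · rw [hR'0, hS'0]
    · linarith [(hmax.isLocalMax (Icc_mem_nhds h0 htu₁)).hasDerivAt_eq_zero (hderG t ht)]
  have hJ : Icc t u₁ ⊆ Ico 0 s := (Icc_subset_Icc_left ht.1).trans hI
  have := (solR.mono hJ).lt_right_of_lt_left (solS.mono hJ)
    (Real.exp_monotone.comp (monotone_mul_left_of_nonneg hlam.le))
    (fun x hx => hDnonneg x (hsub (hJ hx))) (by omega)
    (fun x hx => nonneg_on_Ico_of_pos_on_Ioo hR'0.ge hR'pos x (hsub (hJ hx)))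
    (fun x hx => nonneg_on_Ico_of_pos_on_Ioo hS'0.ge hS'pos x (hJ hx)) htu₁.le hslope hSRt
  linarith

theorem comparison_of_blowup_solutions
    (n : ℕ) (hn : 1 ≤ n) (lam s r : ℝ) (hlam : 0 < lam) (hs : 0 < s) (hsr : s < r)
    (D hr' hr'' hs' hs'' : ℝ → ℝ) (hR hS : ℝ → ℝ)
    (hD : ContinuousOn D (Set.Ico 0 r))
    (hDnonneg : ∀ u ∈ Set.Ico 0 r, 0 ≤ D u)
    (hDzero : ∀ u ∈ Set.Ico 0 r, D u = 0 ↔ u = 0)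
    (hderR1 : ∀ u ∈ Set.Ico 0 r, HasDerivAt hR (hr' u) u)
    (hderR2 : ∀ u ∈ Set.Ico 0 r, HasDerivAt hr' (hr'' u) u)
    (hODER : ∀ u ∈ Set.Ico 0 r, hr'' u * (hr' u) ^ (n - 1) = Real.exp (lam * hR u) * D u)
    (hR'0 : hr' 0 = 0)
    (hR'pos : ∀ u ∈ Set.Ioo 0 r, 0 < hr' u)
    (hR''pos : ∀ u ∈ Set.Ioo 0 r, 0 < hr'' u)
    (hRblow : Filter.Tendsto hR (nhdsWithin r (Set.Iio r)) Filter.atTop)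
    (hderS1 : ∀ u ∈ Set.Ico 0 s, HasDerivAt hS (hs' u) u)
    (hderS2 : ∀ u ∈ Set.Ico 0 s, HasDerivAt hs' (hs'' u) u)
    (hODES : ∀ u ∈ Set.Ico 0 s, hs'' u * (hs' u) ^ (n - 1) = Real.exp (lam * hS u) * D u)
    (hS'0 : hs' 0 = 0)
    (hS'pos : ∀ u ∈ Set.Ioo 0 s, 0 < hs' u)
    (hS''pos : ∀ u ∈ Set.Ioo 0 s, 0 < hs'' u)
    (hSblow : Filter.Tendsto hS (nhdsWithin s (Set.Iio s)) Filter.atTop) :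
    ∀ u ∈ Set.Ico 0 s, hR u ≤ hS u :=
  comparison_of_blowup_solutions_general n hn lam s r hlam hsr D hr' hr'' hs' hs'' hR hS hDnonneg
    hderR1 hderR2 hODER hR'0 hR'pos hderS1 hderS2 hODES hS'0 hS'pos hSblow
end

section
/- The limit potential K for M = ℝ^n satisfies K''(u)(K'(u))^{n-1} = u^{n-1} with K'(0) = 0, K' ≥ 0, whose solutions are exactly K(u) = u^2/2 + c for a constant c; in particular K''(u) = 1 for all u. -/
/-!
With `m = n - 1`, `(K' ^ (m + 1))' = (m + 1) K'' K' ^ m = (m + 1) u ^ m = (u ^ (m + 1))'` and both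
sides vanish at `0`, so `K' ^ (m + 1) = u ^ (m + 1)` on `[0, ∞)` and `K' u = u` because `K' ≥ 0`.
Differentiating once more gives `K'' = 1`, and integrating gives `K = u ^ 2 / 2 + K 0`.
-/

open Set

theorem eq_of_hasDerivAt_eq_of_le {f g f' : ℝ → ℝ} {a x : ℝ}
    (hf : ∀ y, a ≤ y → HasDerivAt f (f' y) y) (hg : ∀ y, a ≤ y → HasDerivAt g (f' y) y)
    (ha : f a = g a) (hx : a ≤ x) : f x = g x :=
  eq_of_has_deriv_right_eq (fun y hy => (hf y hy.1).hasDerivWithinAt)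
    (fun y hy => (hg y hy.1).hasDerivWithinAt)
    (fun y hy => (hf y hy.1).continuousAt.continuousWithinAt)
    (fun y hy => (hg y hy.1).continuousAt.continuousWithinAt) ha x ⟨hx, le_rfl⟩

theorem HasDerivAt.unique_of_eqOn_Ici {f g : ℝ → ℝ} {f' g' a x : ℝ} (hf : HasDerivAt f f' x)
    (hg : HasDerivAt g g' x) (hfg : EqOn f g (Ici a)) (hx : a ≤ x) : f' = g' :=
  (uniqueDiffOn_Ici a x hx).eq_deriv _ hf.hasDerivWithinAt
    (hg.hasDerivWithinAt.congr (fun _ hy => hfg hy) (hfg hx))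

theorem eq_self_of_deriv_mul_pow_eq_pow (m : ℕ) {y y' : ℝ → ℝ} {a x : ℝ} (ha : 0 ≤ a)
    (hy : ∀ t, a ≤ t → HasDerivAt y (y' t) t) (hode : ∀ t, a ≤ t → y' t * y t ^ m = t ^ m)
    (hya : y a = a) (hnonneg : ∀ t, a ≤ t → 0 ≤ y t) (hx : a ≤ x) : y x = x := by
  have hpow : y x ^ (m + 1) = x ^ (m + 1) := by
    refine eq_of_hasDerivAt_eq_of_le (f := (y · ^ (m + 1))) (g := (· ^ (m + 1)))
      (f' := fun t => (m + 1) * t ^ m)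
      (fun t ht => ?_) (fun t _ => ?_) (by rw [hya]) hx
    · refine ((hy t ht).pow (m + 1)).congr_deriv ?_
      rw [← hode t ht]
      push_cast
      ring
    · simpa using hasDerivAt_pow (m + 1) t
  exact (pow_left_inj₀ (hnonneg x hx) (ha.trans hx) m.succ_ne_zero).mp hpow

theorem euclidean_limit_potential_general
    (n : ℕ) (K K' K'' : ℝ → ℝ)
    (hder1 : ∀ u : ℝ, 0 ≤ u → HasDerivAt K (K' u) u)
    (hder2 : ∀ u : ℝ, 0 ≤ u → HasDerivAt K' (K'' u) u)
    (hK'0 : K' 0 = 0)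
    (hK'nonneg : ∀ u : ℝ, 0 ≤ u → 0 ≤ K' u)
    (hODE : ∀ u : ℝ, 0 ≤ u → K'' u * (K' u) ^ (n - 1) = u ^ (n - 1)) :
    (∃ c : ℝ, ∀ u : ℝ, 0 ≤ u → K u = u ^ 2 / 2 + c) ∧
    (∀ u : ℝ, 0 ≤ u → K'' u = 1) := by
  have hK' : EqOn K' id (Ici 0) := fun u hu =>
    eq_self_of_deriv_mul_pow_eq_pow (n - 1) le_rfl hder2 hODE hK'0 hK'nonneg hu
  have hK'' : ∀ u : ℝ, 0 ≤ u → K'' u = 1 := fun u hu =>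
    (hder2 u hu).unique_of_eqOn_Ici (hasDerivAt_id u) hK' hu
  refine ⟨⟨K 0, fun u hu => eq_of_hasDerivAt_eq_of_le
    (g := fun u => u ^ 2 / 2 + K 0) hder1 (fun t ht => ?_) (by simp) hu⟩, hK''⟩
  rw [hK' ht]
  simpa using ((hasDerivAt_pow 2 t).div_const 2).add_const (K 0)

theorem euclidean_limit_potential
    (n : ℕ) (hn : 1 ≤ n) (K K' K'' : ℝ → ℝ)
    (hder1 : ∀ u : ℝ, 0 ≤ u → HasDerivAt K (K' u) u)
    (hder2 : ∀ u : ℝ, 0 ≤ u → HasDerivAt K' (K'' u) u)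
    (hK'0 : K' 0 = 0)
    (hK'nonneg : ∀ u : ℝ, 0 ≤ u → 0 ≤ K' u)
    (hODE : ∀ u : ℝ, 0 ≤ u → K'' u * (K' u) ^ (n - 1) = u ^ (n - 1)) :
    (∃ c : ℝ, ∀ u : ℝ, 0 ≤ u → K u = u ^ 2 / 2 + c) ∧
    (∀ u : ℝ, 0 ≤ u → K'' u = 1) :=
  euclidean_limit_potential_general n K K' K'' hder1 hder2 hK'0 hK'nonneg hODE
end

section
/- Let n ≥ 1 and for each r ∈ (0, π) let h_r : [0, r) → ℝ be the increasing C^2 blow-up solution of h_r''(h_r')^{n-1} = e^{h_r} (sin u)^{n-1} with h_r'(0)=0, h_r' ≥ 0. Then h_r(0) ≥ -π · n^{1/n} · π^{1/n}. -/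
/-!
If `h 0 ≥ 0` there is nothing to prove. Otherwise the blow-up gives a point `a < r < π`
with `h a = 0`, and `h ≤ 0` on `[0, a]` because `h` is increasing. There the ODE says
`((h')ⁿ)' = n eʰ sinⁿ⁻¹ ≤ n`, so `(h' t)ⁿ ≤ n t ≤ n π`, i.e. `h' ≤ (n π)^(1/n)`, and integrating
`h'` over `[0, a]` gives `-h 0 = h a - h 0 ≤ π (n π)^(1/n)`.
-/

open Real Set Filter Topology

lemma image_sub_le_mul_sub_of_hasDerivAt_le {f f' : ℝ → ℝ} {x y C : ℝ} (hxy : x ≤ y)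
    (hf : ∀ u ∈ Icc x y, HasDerivAt f (f' u) u) (hf' : ∀ u ∈ Ioo x y, f' u ≤ C) :
    f y - f x ≤ C * (y - x) := by
  refine (convex_Icc x y).image_sub_le_mul_sub_of_deriv_le
    (fun u hu => (hf u hu).continuousAt.continuousWithinAt)
    (fun u hu => ?_) (fun u hu => ?_) x (left_mem_Icc.2 hxy) y (right_mem_Icc.2 hxy) hxy
  all_goals rw [interior_Icc] at hu
  · exact (hf u (Ioo_subset_Icc_self hu)).differentiableAt.differentiableWithinAt
  · exact (hf u (Ioo_subset_Icc_self hu)).deriv ▸ hf' u hu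

lemma exists_mem_Ico_eq_of_tendsto_atTop {f : ℝ → ℝ} {x r c : ℝ} (hxr : x < r)
    (hf : ContinuousOn f (Ico x r)) (hx : f x ≤ c) (hlim : Tendsto f (𝓝[<] r) atTop) :
    ∃ a ∈ Ico x r, f a = c := by
  obtain ⟨b, hcb, hb⟩ := ((hlim.eventually_ge_atTop c).and
    (Ioo_mem_nhdsLT hxr)).exists
  have hsub : Icc x b ⊆ Ico x r := Icc_subset_Ico_right hb.2
  obtain ⟨a, ha, hfa⟩ := intermediate_value_Icc hb.1.le (hf.mono hsub) ⟨hx, hcb⟩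
  exact ⟨a, hsub ha, hfa⟩

section ODE

variable {n : ℕ} {h h' h'' : ℝ → ℝ} {a : ℝ}

lemma exp_mul_sin_pow_le_one {x u : ℝ} (hx : x ≤ 0) (k : ℕ) : exp x * sin u ^ k ≤ 1 := by
  have hsin : sin u ^ k ≤ 1 :=
    (le_abs_self _).trans ((abs_pow _ _).le.trans (pow_le_one₀ (abs_nonneg _) (abs_sin_le_one u)))
  nlinarith [exp_pos x, exp_le_one_iff.2 hx]

lemma pow_le_mul_of_ode (hn : n ≠ 0)
    (hder2 : ∀ u ∈ Icc 0 a, HasDerivAt h' (h'' u) u)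
    (hODE : ∀ u ∈ Icc 0 a, h'' u * h' u ^ (n - 1) = exp (h u) * sin u ^ (n - 1))
    (hnonpos : ∀ u ∈ Icc 0 a, h u ≤ 0) (h'0 : h' 0 = 0) {t : ℝ} (ht : t ∈ Icc 0 a) :
    h' t ^ n ≤ n * t := by
  have hsub : Icc 0 t ⊆ Icc 0 a := Icc_subset_Icc_right ht.2
  have hder : ∀ u ∈ Icc 0 t,
      HasDerivAt (fun s => h' s ^ n) (n * (exp (h u) * sin u ^ (n - 1))) u := fun u hu => by
    have hpow := (hder2 u (hsub hu)).pow n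
    rwa [show (n : ℝ) * h' u ^ (n - 1) * h'' u = n * (exp (h u) * sin u ^ (n - 1)) by
      rw [← hODE u (hsub hu)]; ring] at hpow
  have hbound : ∀ u ∈ Ioo 0 t, n * (exp (h u) * sin u ^ (n - 1)) ≤ n := fun u hu =>
    mul_le_of_le_one_right n.cast_nonneg
      (exp_mul_sin_pow_le_one (hnonpos u (hsub (Ioo_subset_Icc_self hu))) _)
  simpa [h'0, zero_pow hn] using image_sub_le_mul_sub_of_hasDerivAt_le ht.1 hder hbound

lemma le_rpow_of_ode (hn : n ≠ 0)
    (hder2 : ∀ u ∈ Icc 0 a, HasDerivAt h' (h'' u) u)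
    (hODE : ∀ u ∈ Icc 0 a, h'' u * h' u ^ (n - 1) = exp (h u) * sin u ^ (n - 1))
    (hnonpos : ∀ u ∈ Icc 0 a, h u ≤ 0) (h'0 : h' 0 = 0) (h'nonneg : ∀ u ∈ Icc 0 a, 0 ≤ h' u)
    {t : ℝ} (ht : t ∈ Icc 0 a) : h' t ≤ (n * t) ^ (1 / n : ℝ) := by
  rw [← pow_rpow_inv_natCast (h'nonneg t ht) hn, one_div]
  exact rpow_le_rpow (pow_nonneg (h'nonneg t ht) n)
    (pow_le_mul_of_ode hn hder2 hODE hnonpos h'0 ht) (by positivity)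

end ODE

theorem hyperbolic_potential_lower_bound_general
    (n : ℕ) (hn : 1 ≤ n) (r : ℝ) (hr0 : 0 < r) (hrπ : r < Real.pi)
    (h h' h'' : ℝ → ℝ)
    (hder1 : ∀ u ∈ Set.Ico 0 r, HasDerivAt h (h' u) u)
    (hder2 : ∀ u ∈ Set.Ico 0 r, HasDerivAt h' (h'' u) u)
    (hODE : ∀ u ∈ Set.Ico 0 r,
      h'' u * (h' u) ^ (n - 1) = Real.exp (h u) * (Real.sin u) ^ (n - 1))
    (h'0 : h' 0 = 0)
    (h'nonneg : ∀ u ∈ Set.Ico 0 r, 0 ≤ h' u)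
    (hblow : Filter.Tendsto h (nhdsWithin r (Set.Iio r)) Filter.atTop) :
    -Real.pi * (n : ℝ) ^ ((1 : ℝ) / n) * Real.pi ^ ((1 : ℝ) / n) ≤ h 0 := by
  have hn0 : n ≠ 0 := by omega
  set C : ℝ := (n * π) ^ (1 / n : ℝ)
  rw [mul_assoc, ← mul_rpow n.cast_nonneg pi_pos.le, neg_mul]
  have hC : 0 ≤ C := by positivity
  rcases le_or_gt 0 (h 0) with h0 | h0
  · linarith [mul_nonneg pi_pos.le hC]
  obtain ⟨a, ha, hha⟩ := exists_mem_Ico_eq_of_tendsto_atTop hr0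
    (fun u hu => (hder1 u hu).continuousAt.continuousWithinAt) h0.le hblow
  have hsub : Icc 0 a ⊆ Ico 0 r := Icc_subset_Ico_right ha.2
  have hmono : MonotoneOn h (Icc 0 a) :=
    monotoneOn_of_hasDerivWithinAt_nonneg (convex_Icc 0 a)
      (fun u hu => (hder1 u (hsub hu)).continuousAt.continuousWithinAt)
      (fun u hu => (hder1 u (hsub (interior_subset hu))).hasDerivWithinAt)
      (fun u hu => h'nonneg u (hsub (interior_subset hu)))
  have hnonpos : ∀ u ∈ Icc 0 a, h u ≤ 0 := fun u hu =>
    hha ▸ hmono hu (right_mem_Icc.2 ha.1) hu.2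
  have hslope : ∀ u ∈ Ioo 0 a, h' u ≤ C := fun u hu => by
    have hu' := Ioo_subset_Icc_self hu
    refine (le_rpow_of_ode hn0 (fun v hv => hder2 v (hsub hv))
      (fun v hv => hODE v (hsub hv)) hnonpos h'0 (fun v hv => h'nonneg v (hsub hv)) hu').trans ?_
    have hu_pi : u ≤ π := by linarith [hu.2, ha.2]
    exact rpow_le_rpow (mul_nonneg n.cast_nonneg hu.1.le) (by gcongr) (by positivity)
  have hmvt := image_sub_le_mul_sub_of_hasDerivAt_le ha.1 (fun u hu => hder1 u (hsub hu)) hslope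
  linarith [mul_le_mul_of_nonneg_left (ha.2.trans hrπ).le hC]

theorem hyperbolic_potential_lower_bound
    (n : ℕ) (hn : 1 ≤ n) (r : ℝ) (hr0 : 0 < r) (hrπ : r < Real.pi)
    (h h' h'' : ℝ → ℝ)
    (hder1 : ∀ u ∈ Set.Ico 0 r, HasDerivAt h (h' u) u)
    (hder2 : ∀ u ∈ Set.Ico 0 r, HasDerivAt h' (h'' u) u)
    (hODE : ∀ u ∈ Set.Ico 0 r,
      h'' u * (h' u) ^ (n - 1) = Real.exp (h u) * (Real.sin u) ^ (n - 1))
    (h'0 : h' 0 = 0)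
    (h'nonneg : ∀ u ∈ Set.Ico 0 r, 0 ≤ h' u)
    (h''nonneg : ∀ u ∈ Set.Ico 0 r, 0 ≤ h'' u)
    (hblow : Filter.Tendsto h (nhdsWithin r (Set.Iio r)) Filter.atTop) :
    -Real.pi * (n : ℝ) ^ ((1 : ℝ) / n) * Real.pi ^ ((1 : ℝ) / n) ≤ h 0 :=
  hyperbolic_potential_lower_bound_general n hn r hr0 hrπ h h' h'' hder1 hder2 hODE h'0 h'nonneg
    hblow
end
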